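/- arXiv:0801.3951 — 8 statements merged into one kernel-verified Lean document; each statement's English description precedes it below -/
import Mathlib

section
/- For every natural number n, the n-th power of the matrix product T·S is given explicitly by (T·S)^n = (1/sin(π/q)) · [[sin((n+1)π/q), −sin(nπ/q)], [sin(nπ/q), −sin((n−1)π/q)]]. -/
open Matrix Real

/- `T * S = !![2 cos θ, -1; 1, 0]` with `θ = π / q`, and right multiplication by this matrix is
the recurrence `sin ((x + 1) θ) = 2 cos θ sin (x θ) - sin ((x - 1) θ)`: it shifts `x` by one in
`sinMatrix θ x`. Hence `sin θ • (T * S) ^ n = sinMatrix θ n`, and `sin (π / q) ≠ 0` for `q ≥ 3`. -/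

theorem sin_add_one_mul (x θ : ℝ) :
    sin ((x + 1) * θ) = 2 * cos θ * sin (x * θ) - sin ((x - 1) * θ) := by
  rw [add_mul, sub_mul, one_mul, sin_add, sin_sub]
  ring

noncomputable def sinMatrix (θ x : ℝ) : Matrix (Fin 2) (Fin 2) ℝ :=
  !![sin ((x + 1) * θ), -sin (x * θ); sin (x * θ), -sin ((x - 1) * θ)]

theorem sinMatrix_zero (θ : ℝ) : sinMatrix θ 0 = sin θ • 1 := by
  ext i j
  fin_cases i <;> fin_cases j <;> simp [sinMatrix]

theorem sinMatrix_mul (θ x : ℝ) :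
    sinMatrix θ x * !![2 * cos θ, -1; 1, 0] = sinMatrix θ (x + 1) := by
  rw [sinMatrix, sinMatrix, mul_fin_two, sin_add_one_mul (x + 1), add_sub_cancel_right,
    sin_add_one_mul x]
  ext i j
  fin_cases i <;> fin_cases j <;> simp <;> ring

theorem sin_smul_pow (θ : ℝ) (n : ℕ) :
    sin θ • !![2 * cos θ, -1; 1, 0] ^ n = sinMatrix θ n := by
  induction n with
  | zero => simp [sinMatrix_zero]
  | succ n ih => rw [pow_succ, ← smul_mul, ih, sinMatrix_mul, Nat.cast_succ]

theorem pow_eq_inv_sin_smul_sinMatrix {θ : ℝ} (hθ : sin θ ≠ 0) (n : ℕ) :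
    !![2 * cos θ, -1; 1, 0] ^ n = (sin θ)⁻¹ • sinMatrix θ n := by
  rw [← sin_smul_pow, inv_smul_smul₀ hθ]

/-- For every natural number n, the n-th power of T·S is given by
(T·S)^n = (1/sin(π/q)) · [[sin((n+1)π/q), −sin(nπ/q)], [sin(nπ/q), −sin((n−1)π/q)]],
where q ≥ 3, λ = 2cos(π/q), S = [[0,−1],[1,0]], T = [[1,λ],[0,1]]. -/
theorem TS_pow_explicit (q : ℕ) (hq : 3 ≤ q) (lam : ℝ)
    (hlam : lam = 2 * Real.cos (Real.pi / q))
    (S T : Matrix (Fin 2) (Fin 2) ℝ)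
    (hS : S = !![0, -1; 1, 0]) (hT : T = !![1, lam; 0, 1]) (n : ℕ) :
    (T * S) ^ n = (Real.sin (Real.pi / q))⁻¹ •
      !![Real.sin (((n : ℝ) + 1) * Real.pi / q), -Real.sin ((n : ℝ) * Real.pi / q);
         Real.sin ((n : ℝ) * Real.pi / q), -Real.sin (((n : ℝ) - 1) * Real.pi / q)] := by
  have hTS : T * S = !![2 * cos (π / q), -1; 1, 0] := by
    rw [hS, hT, hlam, mul_fin_two]
    simp
  have hsin : sin (π / q) ≠ 0 := by
    have hq1 : (1 : ℝ) < q := by exact_mod_cast (by omega : 1 < q)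
    exact (sin_pos_of_pos_of_lt_pi (by positivity) (div_lt_self pi_pos hq1)).ne'
  rw [hTS, pow_eq_inv_sin_smul_sinMatrix hsin, sinMatrix]
  simp only [mul_div_assoc]
end

section
/- In SL(2,ℝ) one has (S·T)^q = −I₂ (so (ST)^q is the identity in PSL(2,ℝ)), and for every integer k with 1 ≤ k < q one has (S·T)^k ≠ I₂ and (S·T)^k ≠ −I₂; hence the image of S·T in PSL(2,ℝ) has exact order q. -/
open Matrix Real

/-! `S * T` is the companion matrix `M θ` of `X² - 2 cos θ X + 1` with `θ = π / q`, a conjugate of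
the rotation by `θ`. The recurrence `sin ((n + 1) θ) = 2 cos θ sin (n θ) - sin ((n - 1) θ)` gives
`sin θ • M θ ^ n = !![-sin ((n - 1) θ), -sin (n θ); sin (n θ), sin ((n + 1) θ)]`. At `n = q` the
right side is `-sin θ • 1`, while for `0 < k < q` the lower-left entry `sin (k π / q)` of the
right side is nonzero, which rules out `M θ ^ k = ±1`. -/

noncomputable def cosCompanion (θ : ℝ) : Matrix (Fin 2) (Fin 2) ℝ := !![0, -1; 1, 2 * cos θ]

theorem sin_smul_cosCompanion_pow (θ : ℝ) (n : ℕ) :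
    sin θ • cosCompanion θ ^ n =
      !![-sin ((n - 1) * θ), -sin (n * θ); sin (n * θ), sin ((n + 1) * θ)] := by
  induction n with
  | zero =>
    ext i j
    fin_cases i <;> fin_cases j <;> simp
  | succ n ih =>
    rw [pow_succ, ← smul_mul_assoc, ih, cosCompanion, mul_fin_two]
    push_cast
    rw [add_sub_cancel_right, sin_add_one_mul (n + 1), add_sub_cancel_right,
      sin_add_one_mul n]
    ext i j
    fin_cases i <;> fin_cases j <;> simp <;> ring

theorem sin_mul_cosCompanion_pow_one_zero (θ : ℝ) (n : ℕ) :
    sin θ * (cosCompanion θ ^ n) 1 0 = sin (n * θ) := by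
  simpa using congrFun (congrFun (sin_smul_cosCompanion_pow θ n) 1) 0

theorem cosCompanion_pow_eq_neg_one {θ : ℝ} {n : ℕ} (hθ : sin θ ≠ 0) (hnθ : n * θ = π) :
    cosCompanion θ ^ n = -1 := by
  refine smul_right_injective _ hθ ?_
  beta_reduce
  have hsub : ((n : ℝ) - 1) * θ = π - θ := by linarith
  have hadd : ((n : ℝ) + 1) * θ = θ + π := by linarith
  rw [sin_smul_cosCompanion_pow, hsub, hadd, hnθ, sin_pi_sub, sin_add_pi, sin_pi]
  ext i j
  fin_cases i <;> fin_cases j <;> simp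

theorem cosCompanion_pow_ne_one_and_ne_neg_one {θ : ℝ} {n : ℕ} (hnθ : sin (n * θ) ≠ 0) :
    cosCompanion θ ^ n ≠ 1 ∧ cosCompanion θ ^ n ≠ -1 := by
  have hentry : (cosCompanion θ ^ n) 1 0 ≠ 0 := by
    intro h
    apply hnθ
    rw [← sin_mul_cosCompanion_pow_one_zero, h, mul_zero]
  constructor <;> rintro h <;> simp [h] at hentry

/-- In SL(2,ℝ) one has (S·T)^q = −I₂ (so (ST)^q is the identity in
PSL(2,ℝ)), and for every integer k with 1 ≤ k < q one has (S·T)^k ≠ I₂ and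
(S·T)^k ≠ −I₂; hence the image of S·T in PSL(2,ℝ) has exact order q. -/
theorem ST_order_q (q : ℕ) (hq : 3 ≤ q) (lam : ℝ)
    (hlam : lam = 2 * Real.cos (Real.pi / q))
    (S T : Matrix (Fin 2) (Fin 2) ℝ)
    (hS : S = !![0, -1; 1, 0]) (hT : T = !![1, lam; 0, 1]) :
    (S * T) ^ q = -1 ∧
      ∀ k : ℕ, 1 ≤ k → k < q → (S * T) ^ k ≠ 1 ∧ (S * T) ^ k ≠ -1 := by
  have hST : S * T = cosCompanion (π / q) := by
    subst hS hT hlam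
    rw [mul_fin_two, cosCompanion]
    norm_num
  have hq_mul : (q : ℝ) * (π / q) = π := by field_simp
  have sin_mul_pos {k : ℕ} (hk : 1 ≤ k) (hkq : k < q) : 0 < sin (k * (π / q)) := by
    apply sin_pos_of_pos_of_lt_pi (by positivity)
    refine lt_of_lt_of_eq ?_ hq_mul
    gcongr
  rw [hST]
  refine ⟨cosCompanion_pow_eq_neg_one ?_ hq_mul, fun k hk hkq ↦
    cosCompanion_pow_ne_one_and_ne_neg_one (sin_mul_pos hk hkq).ne'⟩
  simpa using (sin_mul_pos (k := 1) le_rfl (by omega)).ne'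
end

section
/- Let q ≥ 4 be even and h = (q−2)/2. Then the Möbius transformation (S·T)^h maps 0 to −λ/2; equivalently, the point −λ/2 has the finite regular λ-fraction [1^h]. -/
open Matrix Real

/-- The Möbius action of a real 2×2 matrix on ℝ. -/
noncomputable def moeb (A : Matrix (Fin 2) (Fin 2) ℝ) (x : ℝ) : ℝ :=
  (A 0 0 * x + A 0 1) / (A 1 0 * x + A 1 1)

/-
Since λ = 2 cos θ with θ = π/q, the powers of S T = [[0, -1], [1, λ]] satisfy the Chebyshev
recursion, so sin θ · (S T)ⁿ = [[-sin((n-1)θ), -sin(nθ)], [sin(nθ), sin((n+1)θ)]] and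
(S T)ⁿ · 0 = -sin(nθ) / sin((n+1)θ). For n = h we have (h+1)θ = π/2, so the value is
-sin(π/2 - θ) = -cos θ = -λ/2.
-/

lemma moeb_zero (A : Matrix (Fin 2) (Fin 2) ℝ) : moeb A 0 = A 0 1 / A 1 1 := by
  simp [moeb]

lemma S_mul_T (a : ℝ) :
    (!![0, -1; 1, 0] : Matrix (Fin 2) (Fin 2) ℝ) * !![1, a; 0, 1] = !![0, -1; 1, a] := by
  simp

lemma sin_add_mul_add_sin_sub_mul (x θ : ℝ) :
    sin ((x + 1) * θ) + sin ((x - 1) * θ) = 2 * cos θ * sin (x * θ) := by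
  rw [add_mul, sub_mul, one_mul, sin_add, sin_sub]
  ring

lemma sin_smul_pow_chebyshev (θ : ℝ) (n : ℕ) :
    sin θ • (!![0, -1; 1, 2 * cos θ] : Matrix (Fin 2) (Fin 2) ℝ) ^ n =
      !![-sin ((n - 1) * θ), -sin (n * θ); sin (n * θ), sin ((n + 1) * θ)] := by
  induction n with
  | zero =>
    ext i j
    fin_cases i <;> fin_cases j <;> simp
  | succ n ih =>
    have hrec := sin_add_mul_add_sin_sub_mul (n : ℝ) θ
    have hrec' := sin_add_mul_add_sin_sub_mul ((n : ℝ) + 1) θ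
    rw [add_sub_cancel_right] at hrec'
    rw [pow_succ, ← smul_mul_assoc, ih, Matrix.mul_fin_two]
    ext i j
    fin_cases i <;> fin_cases j <;> simp <;> linarith

lemma moeb_pow_chebyshev_zero {θ : ℝ} (hθ : sin θ ≠ 0) (n : ℕ) :
    moeb ((!![0, -1; 1, 2 * cos θ] : Matrix (Fin 2) (Fin 2) ℝ) ^ n) 0 =
      -sin (n * θ) / sin ((n + 1) * θ) := by
  have hpow := sin_smul_pow_chebyshev θ n
  have h01 : sin θ * (!![0, -1; 1, 2 * cos θ] ^ n : Matrix (Fin 2) (Fin 2) ℝ) 0 1 =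
      -sin (n * θ) := by simpa using congrFun (congrFun hpow 0) 1
  have h11 : sin θ * (!![0, -1; 1, 2 * cos θ] ^ n : Matrix (Fin 2) (Fin 2) ℝ) 1 1 =
      sin ((n + 1) * θ) := by simpa using congrFun (congrFun hpow 1) 1
  rw [moeb_zero, ← mul_div_mul_left _ _ hθ, h01, h11]

/-- Let q ≥ 4 be even and h = (q−2)/2. Then the Möbius transformation
(S·T)^h maps 0 to −λ/2; equivalently, −λ/2 has the finite regular λ-fraction [1^h]. -/
theorem neg_half_lambda_expansion_even (q : ℕ) (hq : 4 ≤ q) (hqe : Even q)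
    (lam : ℝ) (hlam : lam = 2 * Real.cos (Real.pi / q))
    (S T : Matrix (Fin 2) (Fin 2) ℝ)
    (hS : S = !![0, -1; 1, 0]) (hT : T = !![1, lam; 0, 1])
    (h : ℕ) (hh : h = (q - 2) / 2) :
    moeb ((S * T) ^ h) 0 = -(lam / 2) := by
  set θ := π / q with hθ
  have hq1 : (1 : ℝ) < q := by exact_mod_cast (by omega : 1 < q)
  have hsin : sin θ ≠ 0 := by
    refine (sin_pos_of_pos_of_lt_pi (by positivity) ?_).ne'
    exact div_lt_self pi_pos hq1
  have hhθ : ((h : ℝ) + 1) * θ = π / 2 := by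
    have h2 : ((2 * h + 2 : ℕ) : ℝ) = q := by
      obtain ⟨k, rfl⟩ := hqe
      congr 1
      omega
    push_cast at h2
    rw [hθ, ← h2]
    field_simp
  rw [hS, hT, S_mul_T, hlam, moeb_pow_chebyshev_zero hsin,
    show (h : ℝ) * θ = π / 2 - θ by linarith, hhθ, sin_pi_div_two, sin_pi_div_two_sub]
  ring
end

section
/- Let q ≥ 3 be odd and h = (q−3)/2. Then the Möbius transformation (S·T)^h · (S·T²) · (S·T)^h maps 0 to −λ/2; equivalently, the point −λ/2 has the finite regular λ-fraction [1^h, 2, 1^h]. -/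
open Matrix Real

/-!
Both `S T` and `S T²` are of the form `!![0, -1; 1, 2x]`, whose powers have the Chebyshev values
`Uₙ(x)` as entries. At `x = cos (π/q)` the sequence `Uₖ(x) = sin ((k+1)π/q) / sin (π/q)` is
palindromic, `U_{q-2-k}(x) = Uₖ(x)`; for `q = 2h + 3` this gives `U_{h+1}(x) = U_h(x)`, which forces
all entries of `(S T)^h` to be fixed multiples of `U_h(x)`, and the product then maps `0` to `-x`.
-/

open Polynomial Polynomial.Chebyshev

def chebyshevMatrix {R : Type*} [CommRing R] (x : R) : Matrix (Fin 2) (Fin 2) R :=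
  !![0, -1; 1, 2 * x]

theorem chebyshevMatrix_pow {R : Type*} [CommRing R] (x : R) (n : ℕ) :
    chebyshevMatrix x ^ n =
      !![-(U R (n - 2)).eval x, -(U R (n - 1)).eval x; (U R (n - 1)).eval x, (U R n).eval x] := by
  induction n with
  | zero => simp [Matrix.one_fin_two]
  | succ n ih =>
    rw [pow_succ, ih, chebyshevMatrix, Matrix.mul_fin_two]
    push_cast
    simp only [add_sub_cancel_right, show (n : ℤ) + 1 - 2 = n - 1 by ring, U_add_one R (n : ℤ),
      U_eq R (n : ℤ), eval_sub, eval_mul, eval_ofNat, eval_X]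
    congr 1; ring_nf

theorem moeb_chebyshevMatrix_pow_mul_mul_zero (x : ℝ) (n : ℕ)
    (hsymm : (U ℝ (n + 1)).eval x = (U ℝ n).eval x) (hne : (U ℝ n).eval x ≠ 0) :
    moeb (chebyshevMatrix x ^ n * chebyshevMatrix (2 * x) * chebyshevMatrix x ^ n) 0 = -x := by
  have hU_sub_one : (U ℝ (n - 1)).eval x = (2 * x - 1) * (U ℝ n).eval x := by
    have := congrArg (eval x) (U_add_one ℝ (n : ℤ))
    simp only [eval_sub, eval_mul, eval_ofNat, eval_X] at this
    linarith
  have hU_sub_two : (U ℝ (n - 2)).eval x = 2 * x * (U ℝ (n - 1)).eval x - (U ℝ n).eval x := by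
    simpa using congrArg (eval x) (U_sub_two ℝ (n : ℤ))
  rw [chebyshevMatrix_pow, hU_sub_two, hU_sub_one]
  simp only [moeb, chebyshevMatrix, Matrix.mul_fin_two, Matrix.of_apply, Matrix.cons_val',
    Matrix.cons_val_zero, Matrix.cons_val_one, Matrix.empty_val', Matrix.cons_val_fin_one]
  field_simp
  ring

theorem U_real_cos_pi_div_sub (q : ℕ) (hq : 2 ≤ q) (k : ℤ) :
    (U ℝ (q - 2 - k)).eval (cos (π / q)) = (U ℝ k).eval (cos (π / q)) := by
  have hsin : sin (π / q) ≠ 0 :=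
    (sin_pos_of_pos_of_lt_pi (by positivity)
      (div_lt_self pi_pos (by exact_mod_cast hq))).ne'
  apply mul_right_cancel₀ hsin
  rw [U_real_cos, U_real_cos, ← sin_pi_sub]
  congr 1
  push_cast
  field_simp
  ring

theorem U_real_cos_pi_div_pos (q k : ℕ) (hk : k + 2 ≤ q) :
    0 < (U ℝ k).eval (cos (π / q)) := by
  have hq : (0 : ℝ) < q := by exact_mod_cast (by omega : 0 < q)
  have hsin : ∀ t : ℝ, 0 < t → t < q → 0 < sin (t * (π / q)) := fun t ht htq =>
    sin_pos_of_pos_of_lt_pi (by positivity) (by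
      rw [← mul_div_assoc, div_lt_iff₀ hq, mul_comm π]
      exact mul_lt_mul_of_pos_right htq pi_pos)
  have hU := U_real_cos (π / q) k
  push_cast at hU
  have hsin_one := hsin 1 one_pos (by exact_mod_cast (by omega : 1 < q))
  rw [one_mul] at hsin_one
  exact pos_of_mul_pos_left (hU ▸ hsin (k + 1) (by positivity)
    (by exact_mod_cast (by omega : k + 1 < q))) hsin_one.le

/-- Let q ≥ 3 be odd and h = (q−3)/2. Then the Möbius transformation
(S·T)^h · (S·T²) · (S·T)^h maps 0 to −λ/2; equivalently, −λ/2 has the finite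
regular λ-fraction [1^h, 2, 1^h]. -/
theorem neg_half_lambda_expansion_odd (q : ℕ) (hq : 3 ≤ q) (hqo : Odd q)
    (lam : ℝ) (hlam : lam = 2 * Real.cos (Real.pi / q))
    (S T : Matrix (Fin 2) (Fin 2) ℝ)
    (hS : S = !![0, -1; 1, 0]) (hT : T = !![1, lam; 0, 1])
    (h : ℕ) (hh : h = (q - 3) / 2) :
    moeb ((S * T) ^ h * (S * T ^ 2) * (S * T) ^ h) 0 = -(lam / 2) := by
  obtain ⟨k, hk⟩ := hqo
  have hq' : q = 2 * h + 3 := by omega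
  have hST : S * T = chebyshevMatrix (lam / 2) := by
    rw [hS, hT, chebyshevMatrix, Matrix.mul_fin_two]
    congr 1; ring_nf
  have hST2 : S * T ^ 2 = chebyshevMatrix (2 * (lam / 2)) := by
    rw [hS, hT, chebyshevMatrix, sq, Matrix.mul_fin_two, Matrix.mul_fin_two]
    congr 1; ring_nf
  have hx : lam / 2 = cos (π / q) := by rw [hlam]; ring
  rw [hST, hST2]
  apply moeb_chebyshevMatrix_pow_mul_mul_zero
  · rw [hx, ← U_real_cos_pi_div_sub q (by omega) h]
    congr 2
    push_cast [hq']
    ring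
  · rw [hx]
    exact (U_real_cos_pi_div_pos q h (by omega)).ne'
end

section
/- Let q ≥ 3 be odd, h = (q−3)/2, let R be the unique positive root of x² + (2−λ)x − 1 = 0, and set r = R − λ. Then the Möbius transformation (S·T)^{h+1} · T · (S·T)^h · T fixes r, i.e. ((S·T)^{h+1} T (S·T)^h T)·r = r. -/
/-!
With θ = π/q and λ = 2 cos θ, the powers of S·T = [[0, -1], [1, λ]] have Chebyshev entries
U_n(cos θ) = sin((n+1)θ) / sin θ. For q = 2h + 3 the angles (h+1)θ and (h+2)θ add up to π, so
U_h = U_{h+1} =: b > 0, and the three-term recurrence turns the whole word into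
b² · [[-2(λ-1), λ(1-2λ)], [λ, λ²+2]]. This matrix fixes r = R - λ because substituting x = r + λ into
x² + (2-λ)x - 1 gives r² + (λ+2)r + 2λ - 1, which is its fixed-point equation divided by λ.
-/

open Matrix Real

open Polynomial

theorem moeb_smul (A : Matrix (Fin 2) (Fin 2) ℝ) {c : ℝ} (hc : c ≠ 0) (x : ℝ) :
    moeb (c • A) x = moeb A x := by
  simp only [moeb, Matrix.smul_apply, smul_eq_mul, mul_assoc, ← mul_add]
  exact mul_div_mul_left _ _ hc

theorem moeb_eq_self_of_quadratic {lam R : ℝ} (hR : 0 < R)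
    (hquad : R ^ 2 + (2 - lam) * R - 1 = 0) :
    moeb !![-2 * (lam - 1), lam * (1 - 2 * lam); lam, lam ^ 2 + 2] (R - lam) = R - lam := by
  have hden : lam * (R - lam) + (lam ^ 2 + 2) = (R + 1) ^ 2 := by linear_combination -hquad
  simp only [moeb, of_apply, cons_val', cons_val_zero, cons_val_one, empty_val', cons_val_fin_one]
  rw [div_eq_iff (hden ▸ by positivity)]
  linear_combination -lam * hquad

theorem quadratic_root_of_eq_add_sqrt {b R : ℝ} (hR : R = (b + √(b ^ 2 + 4)) / 2) :
    R ^ 2 - b * R - 1 = 0 ∧ 0 < R := by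
  have hsq : √(b ^ 2 + 4) ^ 2 = b ^ 2 + 4 := sq_sqrt (by positivity)
  have hlt : -b < √(b ^ 2 + 4) := by
    calc -b ≤ |b| := neg_le_abs b
      _ = √(b ^ 2) := (sqrt_sq_eq_abs b).symm
      _ < √(b ^ 2 + 4) := sqrt_lt_sqrt (sq_nonneg b) (by linarith)
  subst hR
  exact ⟨by linear_combination hsq / 4, by linarith⟩

theorem pow_eq_chebyshevU {R : Type*} [CommRing R] (x : R) (n : ℕ) :
    !![0, -1; 1, 2 * x] ^ n =
      !![-(Chebyshev.U R (n - 2)).eval x, -(Chebyshev.U R (n - 1)).eval x;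
        (Chebyshev.U R (n - 1)).eval x, (Chebyshev.U R n).eval x] := by
  induction n with
  | zero => ext i j; fin_cases i <;> fin_cases j <;> simp
  | succ n ih =>
    have h2 : ((n + 1 : ℕ) : ℤ) - 2 = n - 1 := by push_cast; ring
    have h1 : ((n + 1 : ℕ) : ℤ) - 1 = n := by push_cast; ring
    rw [pow_succ, ih, h2, h1, Nat.cast_succ, Chebyshev.U_add_one R n, Chebyshev.U_sub_two R n]
    ext i j; fin_cases i <;> fin_cases j <;> simp <;> ring

theorem pow_succ_mul_mul_pow_mul_of_eval_chebyshevU_eq {R : Type*} [CommRing R] {x : R} {h : ℕ}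
    (hU : (Chebyshev.U R h).eval x = (Chebyshev.U R (h + 1)).eval x) :
    !![0, -1; 1, 2 * x] ^ (h + 1) * !![1, 2 * x; 0, 1] * !![0, -1; 1, 2 * x] ^ h *
        !![1, 2 * x; 0, 1] =
      (Chebyshev.U R h).eval x ^ 2 •
        !![-2 * (2 * x - 1), 2 * x * (1 - 2 * (2 * x)); 2 * x, (2 * x) ^ 2 + 2] := by
  have h2 : ((h + 1 : ℕ) : ℤ) - 2 = h - 1 := by push_cast; ring
  have h1 : ((h + 1 : ℕ) : ℤ) - 1 = h := by push_cast; ring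
  rw [pow_eq_chebyshevU, pow_eq_chebyshevU, h2, h1, Nat.cast_succ, Chebyshev.U_sub_two R h,
    Chebyshev.U_sub_one R h]
  simp only [eval_sub, eval_mul, eval_X, eval_ofNat]
  rw [← hU]
  ext i j; fin_cases i <;> fin_cases j <;> simp <;> ring

theorem eval_chebyshevU_cos_eq_of_reflection {θ : ℝ} (hθ : sin θ ≠ 0) {m n : ℤ}
    (hmn : (m + n + 2) * θ = π) :
    (Chebyshev.U ℝ m).eval (cos θ) = (Chebyshev.U ℝ n).eval (cos θ) := by
  refine mul_right_cancel₀ hθ ?_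
  rw [Chebyshev.U_real_cos, Chebyshev.U_real_cos, ← sin_pi_sub]
  congr 1
  linear_combination -hmn

theorem eval_chebyshevU_cos_pos {θ : ℝ} (hθ : 0 < θ) {n : ℕ} (hn : (n + 1) * θ < π) :
    0 < (Chebyshev.U ℝ n).eval (cos θ) := by
  have hsin : 0 < sin θ := sin_pos_of_pos_of_lt_pi hθ (by nlinarith)
  refine pos_of_mul_pos_left ?_ hsin.le
  rw [Chebyshev.U_real_cos]
  push_cast
  exact sin_pos_of_pos_of_lt_pi (by positivity) hn

/-- Let q ≥ 3 be odd, h = (q−3)/2, R the unique positive root of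
x² + (2−λ)x − 1 = 0, and r = R − λ. Then the Möbius transformation
(S·T)^{h+1} · T · (S·T)^h · T fixes r. -/
theorem r_fixed_odd (q : ℕ) (hq : 3 ≤ q) (hqo : Odd q)
    (lam : ℝ) (hlam : lam = 2 * Real.cos (Real.pi / q))
    (R r : ℝ) (hR : R = ((lam - 2) + Real.sqrt ((2 - lam) ^ 2 + 4)) / 2)
    (hr : r = R - lam)
    (S T : Matrix (Fin 2) (Fin 2) ℝ)
    (hS : S = !![0, -1; 1, 0]) (hT : T = !![1, lam; 0, 1])
    (h : ℕ) (hh : h = (q - 3) / 2) :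
    moeb ((S * T) ^ (h + 1) * T * (S * T) ^ h * T) r = r := by
  have hqh : (q : ℝ) = 2 * h + 3 := by
    obtain ⟨k, rfl⟩ := hqo
    rw [hh]
    norm_cast
    omega
  set θ := π / q with hθ
  have hθπ : (2 * h + 3) * θ = π := by
    rw [hθ, ← hqh]
    field_simp
  have hθpos : 0 < θ := by positivity
  have hsin : sin θ ≠ 0 := (sin_pos_of_pos_of_lt_pi hθpos (by nlinarith)).ne'
  have hU : (Chebyshev.U ℝ h).eval (cos θ) = (Chebyshev.U ℝ (h + 1)).eval (cos θ) :=
    eval_chebyshevU_cos_eq_of_reflection hsin (by push_cast; linear_combination hθπ)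
  have hUpos : 0 < (Chebyshev.U ℝ h).eval (cos θ) :=
    eval_chebyshevU_cos_pos hθpos (by nlinarith)
  have hST : S * T = !![0, -1; 1, 2 * cos θ] := by
    rw [hS, hT, hlam]
    simp
  rw [← neg_sub lam 2, neg_sq] at hR
  obtain ⟨hquad, hRpos⟩ := quadratic_root_of_eq_add_sqrt hR
  rw [hST, hT, hlam, pow_succ_mul_mul_pow_mul_of_eval_chebyshevU_eq hU,
    moeb_smul _ (pow_pos hUpos 2).ne', hr, ← hlam]
  exact moeb_eq_self_of_quadratic hRpos (by linear_combination hquad)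
end

section
/- One has ⟨y⟩* = 0 if and only if y ∈ [−R, R]; moreover x − ⟨x⟩*·λ ∈ (r, R] for every x ≥ R and x − ⟨x⟩*·λ ∈ [−R, −r) for every x ≤ −R. Consequently the dual nearest λ-multiple map F_q* maps [−R, 0) into [r, R] and maps (0, R] into [−R, −r]. -/
open Real

/-! The only input from `q` is `1 ≤ λ ≤ 2`, with `λ > 1` for even `q`; it gives `0 < R ≤ 1` and
`R < λ`, i.e. `r < 0 < R`. Shifted by `r` (for `y > 0`) or by `−R` (for `y ≤ 0`), the modified floor
reduces `y` modulo `λ` into `(r, R]`, resp. `[−R, −r)`. As for `F_q*`, the map `y ↦ −1/y` sends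
`[−R, 0)` into `(0, ∞)` and, because `R ≤ 1`, sends `(0, R]` into `(−∞, −R]`. -/

/-- The modified floor function: ⌊x⌋ = n iff n < x ≤ n+1 when x > 0,
and ⌊x⌋ = n iff n ≤ x < n+1 when x ≤ 0. -/
noncomputable def mfloor (x : ℝ) : ℤ := if 0 < x then ⌈x⌉ - 1 else ⌊x⌋

lemma mfloor_of_pos {x : ℝ} (hx : 0 < x) : mfloor x = ⌈x⌉ - 1 := if_pos hx

lemma mfloor_of_nonpos {x : ℝ} (hx : x ≤ 0) : mfloor x = ⌊x⌋ := if_neg hx.not_gt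

lemma mfloor_eq_zero_iff (x : ℝ) : mfloor x = 0 ↔ 0 ≤ x ∧ x ≤ 1 := by
  rcases lt_or_ge 0 x with hx | hx
  · rw [mfloor_of_pos hx, sub_eq_zero, Int.ceil_eq_iff]
    push_cast
    constructor <;> rintro ⟨-, h⟩ <;> exact ⟨by linarith, h⟩
  · rw [mfloor_of_nonpos hx, Int.floor_eq_iff]
    push_cast
    constructor <;> rintro ⟨h, -⟩ <;> exact ⟨h, by linarith⟩

section Reduction

variable {lam s x : ℝ}

lemma sub_mfloor_div_mul_mem_Ioc (hlam : 0 < lam) (hx : s < x) :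
    x - mfloor ((x - s) / lam) * lam ∈ Set.Ioc s (s + lam) := by
  set t := (x - s) / lam
  have ht : t * lam = x - s := div_mul_cancel₀ _ hlam.ne'
  rw [mfloor_of_pos (div_pos (sub_pos.mpr hx) hlam)]
  have h1 := mul_le_mul_of_nonneg_right (Int.le_ceil t) hlam.le
  have h2 := mul_lt_mul_of_pos_right (Int.ceil_lt_add_one t) hlam
  push_cast
  constructor <;> nlinarith

lemma sub_mfloor_div_mul_mem_Ico (hlam : 0 < lam) (hx : x ≤ s) :
    x - mfloor ((x - s) / lam) * lam ∈ Set.Ico s (s + lam) := by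
  set t := (x - s) / lam
  have ht : t * lam = x - s := div_mul_cancel₀ _ hlam.ne'
  rw [mfloor_of_nonpos (div_nonpos_of_nonpos_of_nonneg (sub_nonpos.mpr hx) hlam.le)]
  have h1 := mul_le_mul_of_nonneg_right (Int.floor_le t) hlam.le
  have h2 := mul_lt_mul_of_pos_right (Int.lt_floor_add_one t) hlam
  constructor <;> nlinarith

lemma mfloor_div_eq_zero_iff (hlam : 0 < lam) :
    mfloor ((x - s) / lam) = 0 ↔ x ∈ Set.Icc s (s + lam) := by
  rw [mfloor_eq_zero_iff, div_nonneg_iff, div_le_one hlam, Set.mem_Icc]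
  constructor
  · rintro ⟨h | h, h'⟩ <;> constructor <;> linarith
  · rintro ⟨h, h'⟩; exact ⟨Or.inl ⟨by linarith, hlam.le⟩, by linarith⟩

end Reduction

/-- The shifted nearest `λ`-multiple `⟨y⟩*` of the paper, with `r` written as `R - λ`. -/
noncomputable def shiftedNearest (lam R y : ℝ) : ℤ :=
  if y ≤ 0 then mfloor ((y + R) / lam) else mfloor ((y - (R - lam)) / lam)

section ShiftedNearest

variable {lam R : ℝ}

lemma shiftedNearest_eq_zero_iff (hlam : 0 < lam) (hRlam : R ≤ lam) (y : ℝ) :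
    shiftedNearest lam R y = 0 ↔ y ∈ Set.Icc (-R) R := by
  unfold shiftedNearest
  split_ifs with hy
  · rw [← sub_neg_eq_add, mfloor_div_eq_zero_iff hlam, Set.mem_Icc, Set.mem_Icc]
    constructor <;> rintro ⟨h, -⟩ <;> exact ⟨h, by linarith⟩
  · rw [mfloor_div_eq_zero_iff hlam, Set.mem_Icc, Set.mem_Icc]
    constructor <;> rintro ⟨-, h⟩ <;> exact ⟨by linarith, by linarith⟩

lemma sub_shiftedNearest_mul_mem_Ioc (hlam : 0 < lam) (hRlam : R ≤ lam) {x : ℝ} (hx : 0 < x) :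
    x - shiftedNearest lam R x * lam ∈ Set.Ioc (R - lam) R := by
  rw [shiftedNearest, if_neg hx.not_ge]
  simpa using sub_mfloor_div_mul_mem_Ioc hlam (show R - lam < x by linarith)

lemma sub_shiftedNearest_mul_mem_Ico (hlam : 0 < lam) (hR : 0 ≤ R) {x : ℝ} (hx : x ≤ -R) :
    x - shiftedNearest lam R x * lam ∈ Set.Ico (-R) (-(R - lam)) := by
  rw [shiftedNearest, if_pos (hx.trans (neg_nonpos.mpr hR)), ← sub_neg_eq_add x R, neg_sub,
    sub_eq_neg_add]
  exact sub_mfloor_div_mul_mem_Ico hlam hx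

end ShiftedNearest

lemma cos_pi_div_le_cos_pi_div {m n : ℕ} (hm : 0 < m) (hmn : m ≤ n) :
    cos (π / m) ≤ cos (π / n) := by
  have hm' : (0 : ℝ) < m := by exact_mod_cast hm
  apply cos_le_cos_of_nonneg_of_le_pi (by positivity)
  · exact div_le_self pi_pos.le (by exact_mod_cast hm)
  · exact div_le_div_of_nonneg_left pi_pos.le hm' (by exact_mod_cast hmn)

lemma one_le_two_mul_cos_pi_div {q : ℕ} (hq : 3 ≤ q) : 1 ≤ 2 * cos (π / q) := by
  have := cos_pi_div_le_cos_pi_div (by norm_num) hq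
  rw [Nat.cast_ofNat, cos_pi_div_three] at this
  linarith

lemma one_lt_two_mul_cos_pi_div {q : ℕ} (hq : 4 ≤ q) : 1 < 2 * cos (π / q) := by
  have := cos_pi_div_le_cos_pi_div (by norm_num) hq
  rw [Nat.cast_ofNat, cos_pi_div_four] at this
  linarith [one_lt_sqrt_two]

/-- `R` is the positive root of `x² + (2 - λ)x - 1`; it lies in `(0, 1]` because this polynomial
is `-1` at `0` and `2 - λ ≥ 0` at `1`, and below `λ` because it is `2λ - 1 > 0` at `λ`. -/
lemma odd_radius_bounds {lam : ℝ} (h1 : 1 / 2 < lam) (h2 : lam ≤ 2) :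
    let R := ((lam - 2) + √((2 - lam) ^ 2 + 4)) / 2
    0 < R ∧ R ≤ 1 ∧ R < lam := by
  have hs : √((2 - lam) ^ 2 + 4) ^ 2 = (2 - lam) ^ 2 + 4 := sq_sqrt (by positivity)
  have hs0 := sqrt_nonneg ((2 - lam) ^ 2 + 4)
  refine ⟨?_, ?_, ?_⟩ <;> nlinarith

lemma radius_bounds {q : ℕ} (hq : 3 ≤ q) {R : ℝ}
    (hR : R = if Even q then 1 else
      ((2 * cos (π / q) - 2) + √((2 - 2 * cos (π / q)) ^ 2 + 4)) / 2) :
    0 < R ∧ R ≤ 1 ∧ R < 2 * cos (π / q) := by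
  split_ifs at hR with hq_even
  · have hq4 : 4 ≤ q := by obtain ⟨k, rfl⟩ := hq_even; omega
    subst hR
    exact ⟨one_pos, le_rfl, one_lt_two_mul_cos_pi_div hq4⟩
  · subst hR
    exact odd_radius_bounds (by linarith [one_le_two_mul_cos_pi_div hq])
      (by linarith [cos_le_one (π / q)])

/-- ⟨y⟩* = 0 iff y ∈ [−R, R]; moreover x − ⟨x⟩*·λ ∈ (r, R] for every
x ≥ R and x − ⟨x⟩*·λ ∈ [−R, −r) for every x ≤ −R. Consequently F_q* maps [−R, 0)
into [r, R] and (0, R] into [−R, −r]. -/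
theorem dual_map_properties (q : ℕ) (hq : 3 ≤ q)
    (lam : ℝ) (hlam : lam = 2 * Real.cos (Real.pi / q))
    (R r : ℝ)
    (hR : R = if Even q then 1 else ((lam - 2) + Real.sqrt ((2 - lam) ^ 2 + 4)) / 2)
    (hr : r = R - lam)
    (nlms : ℝ → ℤ)
    (hnlms : ∀ y : ℝ, nlms y =
      if y ≤ 0 then mfloor (y / lam + R / lam) else mfloor (y / lam - r / lam))
    (F : ℝ → ℝ)
    (hF : ∀ y : ℝ, F y = if y = 0 then 0 else -1 / y - (nlms (-1 / y) : ℝ) * lam) :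
    (∀ y : ℝ, nlms y = 0 ↔ y ∈ Set.Icc (-R) R) ∧
      (∀ x : ℝ, R ≤ x → x - (nlms x : ℝ) * lam ∈ Set.Ioc r R) ∧
      (∀ x : ℝ, x ≤ -R → x - (nlms x : ℝ) * lam ∈ Set.Ico (-R) (-r)) ∧
      (∀ y ∈ Set.Ico (-R) (0 : ℝ), F y ∈ Set.Icc r R) ∧
      (∀ y ∈ Set.Ioc (0 : ℝ) R, F y ∈ Set.Icc (-R) (-r)) := by
  subst hlam hr
  obtain ⟨hR0, hR1, hRlam⟩ := radius_bounds hq hR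
  set lam := 2 * cos (π / q)
  have hlam : 0 < lam := hR0.trans hRlam
  obtain rfl : nlms = shiftedNearest lam R :=
    funext fun y => by rw [hnlms, shiftedNearest, ← add_div, ← sub_div]
  refine ⟨shiftedNearest_eq_zero_iff hlam hRlam.le,
    fun x hx => sub_shiftedNearest_mul_mem_Ioc hlam hRlam.le (hR0.trans_le hx),
    fun x hx => sub_shiftedNearest_mul_mem_Ico hlam hR0.le hx, ?_, ?_⟩
  · rintro y ⟨-, hy⟩
    rw [hF, if_neg hy.ne]
    exact Set.Ioc_subset_Icc_self <| sub_shiftedNearest_mul_mem_Ioc hlam hRlam.le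
      (div_pos_of_neg_of_neg neg_one_lt_zero hy)
  · rintro y ⟨hy0, hyR⟩
    have hinv : -1 / y ≤ -R := by
      rw [neg_div, neg_le_neg_iff, le_div_iff₀ hy0]
      nlinarith
    rw [hF, if_neg hy0.ne']
    exact Set.Ico_subset_Icc_self (sub_shiftedNearest_mul_mem_Ico hlam hR0.le hinv)
end

section
/- Let A = [[a,b],[c,d]] ∈ SL(2,ℝ) and set l_A(x) = (ax+b)(cx+d). Let η < ξ be real numbers with l_A(ξ) > 0 and l_A(η) < 0. Then D := ac(ξ+η) + ad + bc is nonzero, and the point w := (acξη − bd)/D + i·√(−l_A(ξ)·l_A(η))/|D| lies in the upper half-plane, lies on the geodesic γ(ξ,η), satisfies Re(A·w) = 0 with Im(A·w) > 0 (i.e. A·w lies on the positive imaginary axis), and g(w, ξ) = (ξ−η)·√(−l_A(ξ)/l_A(η)). -/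
open Real Complex

/-- For z in the upper half-plane and ξ ∈ ℝ, g(z, ξ) = |z − ξ|² / Im z. -/
noncomputable def gfun (z : ℂ) (ξ : ℝ) : ℝ := ‖z - (ξ : ℂ)‖ ^ 2 / z.im

/-!
Write `l(x) = (ax+b)(cx+d)`. The divided difference `(l(ξ) - l(η)) / (ξ - η)` is `D`, so `D > 0`,
and `w = x + iy` has `ξ - x = l(ξ)/D`, `x - η = -l(η)/D`, hence `y² = (ξ - x)(x - η)`: this is
the equation of the circle with diameter `[η, ξ]`. On that circle `ac|w|² + (ad+bc)x + bd`, the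
numerator of `Re(A·w)`, reduces to `Dx + bd - acξη = 0`, while `Im(A·w) = Im w / |cw+d|² > 0`.
Finally `g(w, ξ) = (ξ - η)(ξ - x)/y`, and `(ξ - x)/y = l(ξ)/√(-l(ξ)l(η)) = √(-l(ξ)/l(η))`.
-/

section Mobius

variable (a b c d : ℝ) (z : ℂ)

lemma re_mobius :
    ((a * z + b) / (c * z + d)).re =
      (a * c * (z.re ^ 2 + z.im ^ 2) + (a * d + b * c) * z.re + b * d) / normSq (c * z + d) := by
  rw [div_re, ← add_div]
  congr 1
  simp only [add_re, add_im, mul_re, mul_im, ofReal_re, ofReal_im]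
  ring

lemma im_mobius :
    ((a * z + b) / (c * z + d)).im = (a * d - b * c) * z.im / normSq (c * z + d) := by
  rw [div_im, ← sub_div]
  congr 1
  simp only [add_re, add_im, mul_re, mul_im, ofReal_re, ofReal_im]
  ring

variable {a b c d z}

lemma mobius_denom_ne_zero (hdet : a * d - b * c = 1) (hz : 0 < z.im) :
    (c : ℂ) * z + d ≠ 0 := by
  intro h
  have him : c * z.im = 0 := by simpa using congrArg im h
  obtain rfl : c = 0 := (mul_eq_zero.1 him).resolve_right hz.ne'
  obtain rfl : d = 0 := by simpa using h
  simp at hdet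

lemma im_mobius_pos (hdet : a * d - b * c = 1) (hz : 0 < z.im) :
    0 < ((a * z + b) / (c * z + d)).im := by
  rw [im_mobius, hdet, one_mul]
  exact div_pos hz (normSq_pos.2 (mobius_denom_ne_zero hdet hz))

end Mobius

section DiameterCircle

variable {ξ η : ℝ} {z : ℂ}

lemma norm_sub_midpoint_of_im_sq (hlt : η ≤ ξ) (hz : z.im ^ 2 = (ξ - z.re) * (z.re - η)) :
    ‖z - (((ξ + η) / 2 : ℝ) : ℂ)‖ = (ξ - η) / 2 := by
  refine (sq_eq_sq₀ (norm_nonneg _) (by linarith)).1 ?_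
  rw [Complex.sq_norm, normSq_apply]
  simp only [sub_re, sub_im, ofReal_re, ofReal_im, sub_zero]
  linear_combination hz

lemma gfun_eq_of_im_sq (hz : z.im ^ 2 = (ξ - z.re) * (z.re - η)) :
    gfun z ξ = (ξ - η) * (ξ - z.re) / z.im := by
  rw [gfun, Complex.sq_norm, normSq_apply]
  congr 1
  simp only [sub_re, sub_im, ofReal_re, ofReal_im, sub_zero]
  linear_combination hz

end DiameterCircle

section Quadratic

variable (a b c d ξ η : ℝ)

lemma sub_quadratic_eq_mul_slope :
    (a * ξ + b) * (c * ξ + d) - (a * η + b) * (c * η + d) =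
      (ξ - η) * (a * c * (ξ + η) + a * d + b * c) := by
  ring

variable {a b c d ξ η}

lemma sub_point_re_eq_quadratic_div (hD : a * c * (ξ + η) + a * d + b * c ≠ 0) :
    ξ - (a * c * ξ * η - b * d) / (a * c * (ξ + η) + a * d + b * c) =
        (a * ξ + b) * (c * ξ + d) / (a * c * (ξ + η) + a * d + b * c) ∧
      (a * c * ξ * η - b * d) / (a * c * (ξ + η) + a * d + b * c) - η =
        -((a * η + b) * (c * η + d)) / (a * c * (ξ + η) + a * d + b * c) := by
  constructor <;> (rw [eq_div_iff hD, sub_mul, div_mul_cancel₀ _ hD]; ring)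

lemma re_mobius_eq_zero {z : ℂ}
    (hre : (a * c * (ξ + η) + a * d + b * c) * z.re = a * c * ξ * η - b * d)
    (him : z.im ^ 2 = (ξ - z.re) * (z.re - η)) :
    ((a * z + b) / (c * z + d)).re = 0 := by
  rw [re_mobius, div_eq_zero_iff]
  exact Or.inl (by linear_combination a * c * him + hre)

end Quadratic

lemma div_sqrt_neg_mul {p : ℝ} (hp : 0 ≤ p) (q : ℝ) : p / √(-(p * q)) = √(-p / q) := by
  have hpq : -p / q = p ^ 2 / -(p * q) := by
    field_simp
  rw [hpq, Real.sqrt_div (sq_nonneg p), Real.sqrt_sq hp]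

/-- Let A = [[a,b],[c,d]] ∈ SL(2,ℝ), l_A(x) = (ax+b)(cx+d), η < ξ with
l_A(ξ) > 0 and l_A(η) < 0. Then D := ac(ξ+η)+ad+bc ≠ 0, and the point
w := (acξη − bd)/D + i√(−l_A(ξ)l_A(η))/|D| lies in ℍ, on the geodesic γ(ξ,η),
A·w lies on the positive imaginary axis, and g(w,ξ) = (ξ−η)√(−l_A(ξ)/l_A(η)). -/
theorem intersection_with_geodesic (a b c d ξ η : ℝ) (hdet : a * d - b * c = 1)
    (hlt : η < ξ)
    (hlxi : 0 < (a * ξ + b) * (c * ξ + d))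
    (hleta : (a * η + b) * (c * η + d) < 0) :
    (a * c * (ξ + η) + a * d + b * c) ≠ 0 ∧
    (let D : ℝ := a * c * (ξ + η) + a * d + b * c
     let w : ℂ := (((a * c * ξ * η - b * d) / D : ℝ) : ℂ) +
       (Real.sqrt (-((a * ξ + b) * (c * ξ + d) * ((a * η + b) * (c * η + d)))) / |D| : ℝ) *
         Complex.I
     0 < w.im ∧
       ‖w - (((ξ + η) / 2 : ℝ) : ℂ)‖ = (ξ - η) / 2 ∧
       (((a : ℂ) * w + (b : ℂ)) / ((c : ℂ) * w + (d : ℂ))).re = 0 ∧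
       0 < (((a : ℂ) * w + (b : ℂ)) / ((c : ℂ) * w + (d : ℂ))).im ∧
       gfun w ξ = (ξ - η) *
         Real.sqrt (-((a * ξ + b) * (c * ξ + d)) / ((a * η + b) * (c * η + d)))) := by
  have hD : 0 < a * c * (ξ + η) + a * d + b * c :=
    pos_of_mul_pos_right (by rw [← sub_quadratic_eq_mul_slope]; linarith) (by linarith)
  refine ⟨hD.ne', ?_⟩
  intro D w
  replace hD : 0 < D := hD
  have hre : w.re = (a * c * ξ * η - b * d) / D := by simp [w]
  have him : w.im = √(-((a * ξ + b) * (c * ξ + d) * ((a * η + b) * (c * η + d)))) / D := by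
    simp only [w, add_im, ofReal_im, im_ofReal_mul, I_im, mul_one, zero_add, abs_of_pos hD]
  obtain ⟨hξ, hη⟩ : ξ - w.re = (a * ξ + b) * (c * ξ + d) / D ∧
      w.re - η = -((a * η + b) * (c * η + d)) / D := by
    rw [hre]
    exact sub_point_re_eq_quadratic_div hD.ne'
  have hw_pos : 0 < w.im := by
    rw [him]
    exact div_pos (Real.sqrt_pos.2 (by nlinarith)) hD
  have hw_circle : w.im ^ 2 = (ξ - w.re) * (w.re - η) := by
    rw [him, hξ, hη, div_pow, Real.sq_sqrt (by nlinarith)]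
    field_simp
  refine ⟨hw_pos, norm_sub_midpoint_of_im_sq hlt.le hw_circle,
    re_mobius_eq_zero (by rw [hre]; exact mul_div_cancel₀ _ hD.ne') hw_circle,
    im_mobius_pos hdet hw_pos, ?_⟩
  rw [gfun_eq_of_im_sq hw_circle, hξ, him, ← div_sqrt_neg_mul hlxi.le]
  field_simp
end

section
/- Let c ∈ ℝ, ρ > 0 and let η, ξ be real numbers with η < c−ρ < ξ < c+ρ. Then ξ + η − 2c ≠ 0, and the point z := (ξη + ρ² − c²)/(ξ+η−2c) + i·√(((ξ−c)² − ρ²)(ρ² − (η−c)²))/|ξ+η−2c| lies in the upper half-plane, lies on the geodesic γ(ξ,η), lies on the circle |z − c| = ρ, and satisfies g(z, ξ) = (ξ−η)·√((ρ² − (ξ−c)²)/((η−c)² − ρ²)). -/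
open Real Complex

/-!
The geodesic γ(ξ, η) and the circle |z − c| = ρ meet on their radical axis, the vertical
line Re z = x with x (ξ + η − 2c) = ξη + ρ² − c², obtained by subtracting the two circle
equations. A point x + iy lies on γ(ξ, η) iff (x − ξ)(x − η) + y² = 0, which on the radical
axis yields the stated height. On γ(ξ, η) the function g(·, ξ) simplifies to
(x − ξ)(η − ξ) / y, and x − ξ = (ρ² − (ξ − c)²) / (ξ + η − 2c) gives the stated value.
-/

lemma norm_ofReal_add_mul_I_sub_ofReal_sq (x y a : ℝ) :
    ‖(x : ℂ) + y * I - a‖ ^ 2 = (x - a) ^ 2 + y ^ 2 := by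
  rw [show (x : ℂ) + y * I - a = ((x - a : ℝ) : ℂ) + y * I by push_cast; ring,
    norm_add_mul_I, sq_sqrt (by positivity)]

lemma Real.div_sqrt_mul {a : ℝ} (ha : 0 ≤ a) (b : ℝ) : a / √(a * b) = √(a / b) := by
  rw [sqrt_mul ha, ← div_div, div_sqrt, sqrt_div ha]

section CircleGeodesic

variable {c ρ ξ η x y : ℝ}

lemma norm_sub_midpoint_eq_of_mem_geodesic (hηξ : η ≤ ξ)
    (hgeo : (x - ξ) * (x - η) + y ^ 2 = 0) :
    ‖(x : ℂ) + y * I - ((ξ + η) / 2 : ℝ)‖ = (ξ - η) / 2 := by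
  refine (sq_eq_sq₀ (norm_nonneg _) (by linarith)).1 ?_
  rw [norm_ofReal_add_mul_I_sub_ofReal_sq]
  linear_combination hgeo

lemma norm_sub_center_eq_of_mem_geodesic (hρ : 0 ≤ ρ)
    (hx : x * (ξ + η - 2 * c) = ξ * η + ρ ^ 2 - c ^ 2)
    (hgeo : (x - ξ) * (x - η) + y ^ 2 = 0) :
    ‖(x : ℂ) + y * I - c‖ = ρ := by
  refine (sq_eq_sq₀ (norm_nonneg _) hρ).1 ?_
  rw [norm_ofReal_add_mul_I_sub_ofReal_sq]
  linear_combination hgeo + hx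

lemma gfun_eq_of_mem_geodesic (hgeo : (x - ξ) * (x - η) + y ^ 2 = 0) :
    gfun ((x : ℂ) + y * I) ξ = (x - ξ) * (η - ξ) / y := by
  rw [gfun, norm_ofReal_add_mul_I_sub_ofReal_sq]
  simp only [add_im, ofReal_im, mul_im, ofReal_re, I_re, I_im, mul_zero, mul_one, zero_add,
    add_zero]
  congr 1
  linear_combination hgeo

lemma mem_geodesic_of_mul_eq (hd : ξ + η - 2 * c ≠ 0)
    (hx : x * (ξ + η - 2 * c) = ξ * η + ρ ^ 2 - c ^ 2)
    (hP : 0 ≤ ((ξ - c) ^ 2 - ρ ^ 2) * (ρ ^ 2 - (η - c) ^ 2)) :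
    (x - ξ) * (x - η) +
      (√(((ξ - c) ^ 2 - ρ ^ 2) * (ρ ^ 2 - (η - c) ^ 2)) / |ξ + η - 2 * c|) ^ 2 = 0 := by
  have hξ : (x - ξ) * (ξ + η - 2 * c) = ρ ^ 2 - (ξ - c) ^ 2 := by linear_combination hx
  have hη : (x - η) * (ξ + η - 2 * c) = ρ ^ 2 - (η - c) ^ 2 := by linear_combination hx
  have hd2 : (ξ + η - 2 * c) ^ 2 ≠ 0 := pow_ne_zero 2 hd
  rw [div_pow, sq_abs, sq_sqrt hP, ← mul_left_inj' hd2, zero_mul, add_mul, div_mul_cancel₀ _ hd2]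
  linear_combination (x - η) * (ξ + η - 2 * c) * hξ + (ρ ^ 2 - (ξ - c) ^ 2) * hη

end CircleGeodesic

/-- Let c ∈ ℝ, ρ > 0 and η < c−ρ < ξ < c+ρ. Then ξ+η−2c ≠ 0, and
z := (ξη+ρ²−c²)/(ξ+η−2c) + i√(((ξ−c)²−ρ²)(ρ²−(η−c)²))/|ξ+η−2c| lies in ℍ, on the
geodesic γ(ξ,η), on the circle |z−c| = ρ, and
g(z,ξ) = (ξ−η)√((ρ²−(ξ−c)²)/((η−c)²−ρ²)). -/
theorem intersection_circular (c ρ ξ η : ℝ) (hρ : 0 < ρ)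
    (h1 : η < c - ρ) (h2 : c - ρ < ξ) (h3 : ξ < c + ρ) :
    ξ + η - 2 * c ≠ 0 ∧
    (let z : ℂ := (((ξ * η + ρ ^ 2 - c ^ 2) / (ξ + η - 2 * c) : ℝ) : ℂ) +
      (Real.sqrt (((ξ - c) ^ 2 - ρ ^ 2) * (ρ ^ 2 - (η - c) ^ 2)) / |ξ + η - 2 * c| : ℝ) *
        Complex.I
     0 < z.im ∧
       ‖z - (((ξ + η) / 2 : ℝ) : ℂ)‖ = (ξ - η) / 2 ∧
       ‖z - (c : ℂ)‖ = ρ ∧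
       gfun z ξ = (ξ - η) *
         Real.sqrt ((ρ ^ 2 - (ξ - c) ^ 2) / ((η - c) ^ 2 - ρ ^ 2))) := by
  have hd : ξ + η - 2 * c < 0 := by linarith
  have ha : 0 < ρ ^ 2 - (ξ - c) ^ 2 := by nlinarith
  have hb : 0 < (η - c) ^ 2 - ρ ^ 2 := by nlinarith
  have hP : ((ξ - c) ^ 2 - ρ ^ 2) * (ρ ^ 2 - (η - c) ^ 2)
      = (ρ ^ 2 - (ξ - c) ^ 2) * ((η - c) ^ 2 - ρ ^ 2) := by ring
  have hx : (ξ * η + ρ ^ 2 - c ^ 2) / (ξ + η - 2 * c) * (ξ + η - 2 * c)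
      = ξ * η + ρ ^ 2 - c ^ 2 := div_mul_cancel₀ _ hd.ne
  have hgeo := mem_geodesic_of_mul_eq hd.ne hx (hP ▸ by positivity)
  refine ⟨hd.ne, ?_, norm_sub_midpoint_eq_of_mem_geodesic (by linarith) hgeo,
    norm_sub_center_eq_of_mem_geodesic hρ.le hx hgeo, ?_⟩
  · simp only [add_im, ofReal_im, mul_im, ofReal_re, I_re, I_im, mul_zero, mul_one, zero_add,
      add_zero, hP]
    have hd0 : ξ + η - 2 * c ≠ 0 := hd.ne
    positivity
  · have hξ : (ξ * η + ρ ^ 2 - c ^ 2) / (ξ + η - 2 * c) - ξ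
        = (ρ ^ 2 - (ξ - c) ^ 2) / (ξ + η - 2 * c) :=
      eq_div_of_mul_eq hd.ne (by linear_combination hx)
    rw [gfun_eq_of_mem_geodesic hgeo, hP, abs_of_neg hd, hξ, ← div_sqrt_mul ha.le,
      div_div_eq_mul_div, mul_div_assoc']
    congr 1
    linear_combination (ξ - η) * div_mul_cancel₀ (ρ ^ 2 - (ξ - c) ^ 2) hd.ne
end
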